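/- arXiv:2108.11828 — 7 statements merged into one kernel-verified Lean document; each statement's English description precedes it below -/
import Mathlib

section
/- For every complex number $\lambda$ with $|\lambda| \geq 2$, the subgroup of $\mathrm{PSL}_2(\mathbb{C})$ generated by the images of the matrices $T^\lambda = \begin{pmatrix} 1 & \lambda \\ 0 & 1 \end{pmatrix}$ and $V^\lambda = \begin{pmatrix} 1 & 0 \\ \lambda & 1 \end{pmatrix}$ is freely generated by these two elements. -/
/-- `PSL₂(ℂ) = SL₂(ℂ)/center`. -/
abbrev PSL2C := Matrix.SpecialLinearGroup (Fin 2) ℂ ⧸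
  Subgroup.center (Matrix.SpecialLinearGroup (Fin 2) ℂ)

/-- The image of `T^λ = (1 λ; 0 1)` in `PSL₂(ℂ)`. -/
def Tpsl (lam : ℂ) : PSL2C :=
  QuotientGroup.mk (⟨!![1, lam; 0, 1], by simp [Matrix.det_fin_two_of]⟩ :
    Matrix.SpecialLinearGroup (Fin 2) ℂ)

/-- The image of `V^λ = (1 0; λ 1)` in `PSL₂(ℂ)`. -/
def Vpsl (lam : ℂ) : PSL2C :=
  QuotientGroup.mk (⟨!![1, 0; lam, 1], by simp [Matrix.det_fin_two_of]⟩ :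
    Matrix.SpecialLinearGroup (Fin 2) ℂ)

/-!
Ping-pong. Let `PSL₂(ℂ)` act on itself by left multiplication and sort its elements `g` by
whether `g • ∞ = a₀₀ / a₁₀` lies inside or outside the unit circle; the centre is `±1`, so
`|a₀₀|` and `|a₁₀|` are well defined. A nonzero power `(T^λ)ⁿ = T^{nλ}` is the translation
`z ↦ z + nλ` with `|nλ| ≥ 2`, so it throws the inside into the outside; symmetrically,
`(V^λ)ⁿ` throws the outside into the inside. The ping-pong lemma for the free products of the
cyclic groups then makes the lift from the free group injective.
-/

open Matrix Pointwise

section PingPong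

open Monoid Function Cardinal

variable {ι G α : Type*} [Nontrivial ι] [Group G] [MulAction G α]

theorem FreeGroup.injective_lift_of_ping_pong_zpow (a : ι → G) (X : ι → Set α)
    (hXnonempty : ∀ i, (X i).Nonempty) (hXdisj : Pairwise (Disjoint on X))
    (hpp : Pairwise fun i j => ∀ n : ℤ, n ≠ 0 → a i ^ n • X j ⊆ X i) :
    Injective (FreeGroup.lift a) := by
  have hlift : FreeGroup.lift a =
      (CoprodI.lift fun i => FreeGroup.lift fun _ : Unit => a i).comp
        (freeGroupEquivCoprodI (ι := ι)).toMonoidHom := by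
    ext i
    simp
  rw [hlift, MonoidHom.coe_comp]
  refine Injective.comp ?_ freeGroupEquivCoprodI.injective
  have hcard : 3 ≤ #(FreeGroup Unit) := by
    exact_mod_cast (natCast_lt_aleph0 (n := 3)).le.trans (aleph0_le_mk _)
  refine CoprodI.lift_injective_of_ping_pong _ (.inr ⟨Classical.arbitrary ι, hcard⟩) X
    hXnonempty hXdisj ?_
  intro i j hij
  refine FreeGroup.freeGroupUnitEquivInt.forall_congr_left.mpr fun n hn => ?_
  have hn0 : n ≠ 0 := by
    rintro rfl
    exact hn (by simp [FreeGroup.freeGroupUnitEquivInt])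
  simpa [FreeGroup.freeGroupUnitEquivInt] using hpp hij n hn0

end PingPong

lemma norm_lt_norm_add_mul {𝕜 : Type*} [NormedDivisionRing 𝕜] {x y c : 𝕜} (hc : 2 ≤ ‖c‖)
    (h : ‖x‖ < ‖y‖) : ‖y‖ < ‖x + c * y‖ := by
  have htri : ‖c * y‖ ≤ ‖x + c * y‖ + ‖x‖ := by simpa using norm_sub_le (x + c * y) x
  rw [norm_mul] at htri
  nlinarith [norm_nonneg y]

lemma norm_le_norm_zsmul {E : Type*} [NormedAddCommGroup E] [NormedSpace ℝ E] (x : E)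
    {n : ℤ} (hn : n ≠ 0) : ‖x‖ ≤ ‖n • x‖ := by
  have h1 : (1 : ℝ) ≤ ‖(n : ℝ)‖ := by
    rw [Real.norm_eq_abs, ← Int.cast_abs]
    exact_mod_cast Int.one_le_abs hn
  rw [norm_zsmul ℝ]
  exact le_mul_of_one_le_left (norm_nonneg x) h1

namespace Matrix.SpecialLinearGroup

section Unipotent

variable {R : Type*} [CommRing R]

def upperUnipotent : Multiplicative R →* SpecialLinearGroup (Fin 2) R where
  toFun c := ⟨!![1, c.toAdd; 0, 1], by simp [det_fin_two_of]⟩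
  map_one' := Subtype.ext <| by simp [one_fin_two]
  map_mul' a b := Subtype.ext <| (mul_fin_two ..).trans (by simp [add_comm]) |>.symm

def lowerUnipotent : Multiplicative R →* SpecialLinearGroup (Fin 2) R where
  toFun c := ⟨!![1, 0; c.toAdd, 1], by simp [det_fin_two_of]⟩
  map_one' := Subtype.ext <| by simp [one_fin_two]
  map_mul' a b := Subtype.ext <| (mul_fin_two ..).trans (by simp) |>.symm

@[simp]
lemma coe_upperUnipotent (c : Multiplicative R) :
    (upperUnipotent c : Matrix (Fin 2) (Fin 2) R) = !![1, c.toAdd; 0, 1] :=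
  rfl

@[simp]
lemma coe_lowerUnipotent (c : Multiplicative R) :
    (lowerUnipotent c : Matrix (Fin 2) (Fin 2) R) = !![1, 0; c.toAdd, 1] :=
  rfl

end Unipotent

lemma norm_mul_apply_of_mem_center {n 𝕜 : Type*} [Fintype n] [DecidableEq n] [NormedField 𝕜]
    (A : SpecialLinearGroup n 𝕜) {z : SpecialLinearGroup n 𝕜}
    (hz : z ∈ Subgroup.center (SpecialLinearGroup n 𝕜)) (i j : n) :
    ‖(A * z) i j‖ = ‖A i j‖ := by
  obtain ⟨r, hr, hrz⟩ := mem_center_iff.mp hz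
  have : Nonempty n := ⟨i⟩
  have hr1 : ‖r‖ = 1 :=
    (pow_eq_one_iff_of_nonneg (norm_nonneg r) Fintype.card_ne_zero).mp
      (by rw [← norm_pow, hr, norm_one])
  simp [coe_mul, ← hrz, hr1]

end Matrix.SpecialLinearGroup

namespace PSL2C

open Matrix.SpecialLinearGroup (upperUnipotent lowerUnipotent norm_mul_apply_of_mem_center)

noncomputable def entryNorm (i j : Fin 2) : PSL2C → ℝ :=
  Quotient.lift (fun A : SpecialLinearGroup (Fin 2) ℂ => ‖A i j‖) fun A B h => by
    simpa using (norm_mul_apply_of_mem_center A (QuotientGroup.leftRel_apply.mp h) i j).symm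

@[simp]
lemma entryNorm_mk (i j : Fin 2) (A : SpecialLinearGroup (Fin 2) ℂ) :
    entryNorm i j A = ‖A i j‖ :=
  rfl

/-- `g` lies here iff the Möbius image `g • ∞ = a₀₀ / a₁₀` lies outside the closed unit disc. -/
def outsideDisc : Set PSL2C := {g | entryNorm 1 0 g < entryNorm 0 0 g}

def insideDisc : Set PSL2C := {g | entryNorm 0 0 g < entryNorm 1 0 g}

lemma disjoint_outsideDisc_insideDisc : Disjoint outsideDisc insideDisc :=
  Set.disjoint_left.mpr fun _ hT hV => lt_asymm (α := ℝ) hT hV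

lemma upperUnipotent_smul_insideDisc {c : ℂ} (hc : 2 ≤ ‖c‖) :
    (upperUnipotent (.ofAdd c) : PSL2C) • insideDisc ⊆ outsideDisc := by
  rintro _ ⟨g, hg, rfl⟩
  induction g using QuotientGroup.induction_on with | H A => ?_
  simp only [insideDisc, outsideDisc, Set.mem_ofPred_eq, smul_eq_mul, ← QuotientGroup.mk_mul,
    entryNorm_mk] at hg ⊢
  simpa [Matrix.SpecialLinearGroup.coe_mul, mul_apply, Fin.sum_univ_two]
    using norm_lt_norm_add_mul hc hg

lemma lowerUnipotent_smul_outsideDisc {c : ℂ} (hc : 2 ≤ ‖c‖) :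
    (lowerUnipotent (.ofAdd c) : PSL2C) • outsideDisc ⊆ insideDisc := by
  rintro _ ⟨g, hg, rfl⟩
  induction g using QuotientGroup.induction_on with | H A => ?_
  simp only [insideDisc, outsideDisc, Set.mem_ofPred_eq, smul_eq_mul, ← QuotientGroup.mk_mul,
    entryNorm_mk] at hg ⊢
  simpa [Matrix.SpecialLinearGroup.coe_mul, mul_apply, Fin.sum_univ_two, add_comm]
    using norm_lt_norm_add_mul hc hg

lemma Tpsl_zpow (lam : ℂ) (n : ℤ) : Tpsl lam ^ n = upperUnipotent (.ofAdd (n • lam)) := by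
  rw [ofAdd_zsmul, map_zpow, QuotientGroup.mk_zpow]
  rfl

lemma Vpsl_zpow (lam : ℂ) (n : ℤ) : Vpsl lam ^ n = lowerUnipotent (.ofAdd (n • lam)) := by
  rw [ofAdd_zsmul, map_zpow, QuotientGroup.mk_zpow]
  rfl

lemma Tpsl_mem_outsideDisc (lam : ℂ) : Tpsl lam ∈ outsideDisc := by
  show ‖(0 : ℂ)‖ < ‖(1 : ℂ)‖
  simp

lemma Vpsl_mem_insideDisc {lam : ℂ} (hlam : 2 ≤ ‖lam‖) : Vpsl lam ∈ insideDisc := by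
  show ‖(1 : ℂ)‖ < ‖lam‖
  rw [norm_one]
  linarith

lemma Tpsl_zpow_smul_insideDisc {lam : ℂ} (hlam : 2 ≤ ‖lam‖) {n : ℤ} (hn : n ≠ 0) :
    Tpsl lam ^ n • insideDisc ⊆ outsideDisc := by
  rw [Tpsl_zpow]
  exact upperUnipotent_smul_insideDisc (hlam.trans (norm_le_norm_zsmul lam hn))

lemma Vpsl_zpow_smul_outsideDisc {lam : ℂ} (hlam : 2 ≤ ‖lam‖) {n : ℤ} (hn : n ≠ 0) :
    Vpsl lam ^ n • outsideDisc ⊆ insideDisc := by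
  rw [Vpsl_zpow]
  exact lowerUnipotent_smul_outsideDisc (hlam.trans (norm_le_norm_zsmul lam hn))

end PSL2C

open PSL2C in
/-- For `|λ| ≥ 2`, the subgroup of `PSL₂(ℂ)` generated by `T^λ` and `V^λ` is freely
generated by them: the induced map from the free group on two generators is injective. -/
theorem free_group_on_T_V (lam : ℂ) (hlam : 2 ≤ ‖lam‖) :
    Function.Injective
      (FreeGroup.lift (fun b : Bool => if b then Tpsl lam else Vpsl lam)) := by
  refine FreeGroup.injective_lift_of_ping_pong_zpow _
    (fun b => if b then outsideDisc else insideDisc) ?_ ?_ ?_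
  · rintro (_ | _)
    exacts [⟨_, Vpsl_mem_insideDisc hlam⟩, ⟨_, Tpsl_mem_outsideDisc lam⟩]
  · rintro (_ | _) (_ | _) h
    exacts [(h rfl).elim, disjoint_outsideDisc_insideDisc.symm, disjoint_outsideDisc_insideDisc,
      (h rfl).elim]
  · rintro (_ | _) (_ | _) h n hn
    exacts [(h rfl).elim, Vpsl_zpow_smul_outsideDisc hlam hn, Tpsl_zpow_smul_insideDisc hlam hn,
      (h rfl).elim]
end

section
/- Let $\beta$ be an element of a commutative ring $R$ such that $u = 1 + 5\beta$ is a unit of $R$. Then in $\mathrm{SL}_2(R)$ the relation $T^{-2\beta u^{-1}} V^2 T^2 V^{2\beta} T^{-2u^{-1}} V^{-2u} = \pm I$ holds, where $T^x = \begin{pmatrix} 1 & x \\ 0 & 1 \end{pmatrix}$ and $V^x = \begin{pmatrix} 1 & 0 \\ x & 1 \end{pmatrix}$. -/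
/-- If `u = 1 + 5β` is a unit in a commutative ring `R`, then in `SL₂(R)` one has the
relation `T^{-2βu⁻¹} V² T² V^{2β} T^{-2u⁻¹} V^{-2u} = ± I`, where `T^x` and `V^x` are the
upper and lower triangular unipotent matrices. -/
theorem unipotent_relation (R : Type*) [CommRing R] (β : R) (u : Rˣ)
    (hu : (u : R) = 1 + 5 * β) :
    (!![1, -2 * β * (↑u⁻¹ : R); 0, 1] * !![1, 0; 2, 1] * !![1, 2; 0, 1] *
        !![1, 0; 2 * β, 1] * !![1, -2 * (↑u⁻¹ : R); 0, 1] * !![1, 0; -2 * (u : R), 1]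
          = (1 : Matrix (Fin 2) (Fin 2) R)) ∨
      (!![1, -2 * β * (↑u⁻¹ : R); 0, 1] * !![1, 0; 2, 1] * !![1, 2; 0, 1] *
        !![1, 0; 2 * β, 1] * !![1, -2 * (↑u⁻¹ : R); 0, 1] * !![1, 0; -2 * (u : R), 1]
          = (-1 : Matrix (Fin 2) (Fin 2) R)) := by
  left
  have hv : (↑u⁻¹ : R) * (1 + 5 * β) = 1 := by rw [← hu]; exact u.inv_mul
  ext i j
  fin_cases i <;> fin_cases j <;>
      simp [Matrix.mul_apply, Fin.sum_univ_succ, Matrix.one_apply, hu]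
  · linear_combination (4 + 16 * β + -16 * β * (↑u⁻¹:R) + -80 * β^2 * (↑u⁻¹:R)) * hv
  · linear_combination (-2 + 8 * β * (↑u⁻¹:R)) * hv
  · linear_combination (8 + 40 * β) * hv
  · linear_combination (-4 : R) * hv
end

section
/- Let $n \geq 2$ and let $L_1, L_2 \subset \mathbb{R}^n$ be lattices (discrete cocompact subgroups). Suppose $L_1$ contains a nonzero vector $x_0$ whose first coordinate is zero. Then there exists a sequence of nonzero vectors $y_k \in L_2$ such that the commutators $[T^{x_0}, V^{y_k}]$ converge to the identity in $\mathrm{SL}_2(\mathbb{R})^n$, where $T^x = (\begin{pmatrix} 1 & x_j \\ 0 & 1\end{pmatrix})_{j=1}^n$ and $V^y = (\begin{pmatrix} 1 & 0 \\ y_j & 1\end{pmatrix})_{j=1}^n$, and moreover the commutators are nontrivial whenever $[T^{x_0}, V^{y_k}] \neq 1$ can be arranged; consequently, if the group generated by $\{T^x : x \in L_1\}$ and $\{V^y : y \in L_2\}$ is discrete, then some such commutator is trivial. -/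
open Filter
open scoped commutatorElement

/-- Topology on `SL₂(ℝ)`, induced from the space of matrices. -/
instance : TopologicalSpace (Matrix.SpecialLinearGroup (Fin 2) ℝ) :=
  TopologicalSpace.induced (fun g => (g : Matrix (Fin 2) (Fin 2) ℝ)) inferInstance

/-- The upper unipotent element `T^x ∈ SL₂(ℝ)ⁿ` attached to `x ∈ ℝⁿ`. -/
def Tmat (n : ℕ) (x : Fin n → ℝ) : Fin n → Matrix.SpecialLinearGroup (Fin 2) ℝ :=
  fun j => ⟨!![1, x j; 0, 1], by simp [Matrix.det_fin_two_of]⟩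

/-- The lower unipotent element `V^y ∈ SL₂(ℝ)ⁿ` attached to `y ∈ ℝⁿ`. -/
def Vmat (n : ℕ) (y : Fin n → ℝ) : Fin n → Matrix.SpecialLinearGroup (Fin 2) ℝ :=
  fun j => ⟨!![1, 0; y j, 1], by simp [Matrix.det_fin_two_of]⟩

/-!
The projection of `ℝⁿ` onto the `n - 1` coordinates other than the first cannot map a lattice
(of rank `n`) injectively onto a discrete subgroup, so `L₂` contains nonzero `y_k` whose
coordinates other than the first tend to `0`. In each coordinate `[T^a, V^b]` is a polynomial matrix in `a, b` which is `1`
when `a = 0` or `b = 0`; as `x₀` has first coordinate `0`, the commutators `[T^{x₀}, V^{y_k}]`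
tend to `1`. In a discrete group such a sequence is eventually `1`.
-/

open Module Topology

lemma Submodule.finrank_int_le_finrank_real_of_discreteTopology {F : Type*}
    [NormedAddCommGroup F] [NormedSpace ℝ F] [FiniteDimensional ℝ F]
    (M : Submodule ℤ F) [DiscreteTopology M] :
    finrank ℤ M ≤ finrank ℝ F := by
  have hspan : span ℤ (M : Set F) = M := span_eq M
  have hrank := Real.finrank_eq_int_finrank_of_discrete (s := (M : Set F)) (by rwa [hspan])
  rw [Set.finrank, Set.finrank, hspan] at hrank
  exact hrank ▸ Submodule.finrank_le _

lemma Submodule.exists_seq_mem_ne_zero_tendsto_zero_of_finrank_lt {E F : Type*}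
    [AddCommGroup E] [NormedAddCommGroup F] [NormedSpace ℝ F] [FiniteDimensional ℝ F]
    (L : Submodule ℤ E) (f : E →ₗ[ℤ] F) (h : finrank ℝ F < finrank ℤ L) :
    ∃ y : ℕ → E, (∀ k, y k ∈ L ∧ y k ≠ 0) ∧ Tendsto (fun k => f (y k)) atTop (𝓝 0) := by
  suffices hsmall : ∀ ε > 0, ∃ y ∈ L, y ≠ 0 ∧ ‖f y‖ < ε by
    choose y hyL hy0 hyε using fun k : ℕ => hsmall (1 / (k + 1)) (by positivity)
    exact ⟨y, fun k => ⟨hyL k, hy0 k⟩, squeeze_zero_norm (fun k => (hyε k).le)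
      tendsto_one_div_add_atTop_nhds_zero_nat⟩
  by_contra! hbig
  obtain ⟨ε, hε, hbig⟩ := hbig
  have hinj : Function.Injective (f ∘ₗ L.subtype) := by
    rw [← LinearMap.ker_eq_bot, LinearMap.ker_eq_bot']
    intro x hx
    by_contra hx0
    have hεx := hbig x x.2 (by simpa using hx0)
    rw [LinearMap.comp_apply, Submodule.subtype_apply] at hx
    rw [hx, norm_zero] at hεx
    linarith
  let M := LinearMap.range (f ∘ₗ L.subtype)
  have : DiscreteTopology M := DiscreteTopology.of_forall_le_norm hε <| by
    rintro ⟨_, x, rfl⟩ hx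
    exact hbig x x.2 (by rintro h; apply hx; simp [h])
  have hrank := M.finrank_int_le_finrank_real_of_discreteTopology
  rw [LinearMap.finrank_range_of_inj hinj] at hrank
  omega

lemma IsZLattice.exists_seq_mem_ne_zero_tendsto_apply_zero {ι : Type*} [Fintype ι]
    (L : Submodule ℤ (ι → ℝ)) [DiscreteTopology L] [IsZLattice ℝ L] (i : ι) :
    ∃ y : ℕ → ι → ℝ, (∀ k, y k ∈ L ∧ y k ≠ 0) ∧
      ∀ j ≠ i, Tendsto (fun k => y k j) atTop (𝓝 0) := by
  classical
  let restrict := (LinearMap.funLeft ℝ ℝ (Subtype.val : {j // j ≠ i} → ι)).restrictScalars ℤ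
  obtain ⟨y, hy, hlim⟩ := L.exists_seq_mem_ne_zero_tendsto_zero_of_finrank_lt restrict <| by
    rw [ZLattice.rank ℝ L, finrank_fintype_fun_eq_card, finrank_fintype_fun_eq_card]
    exact Fintype.card_subtype_lt (x := i) (by simp)
  exact ⟨y, hy, fun j hj => by
    simpa [restrict, Function.comp_def] using ((continuous_apply ⟨j, hj⟩).tendsto 0).comp hlim⟩

lemma coe_commutatorElement_Tmat_Vmat_apply (n : ℕ) (x y : Fin n → ℝ) (j : Fin n) :
    ((⁅Tmat n x, Vmat n y⁆ j : Matrix.SpecialLinearGroup (Fin 2) ℝ) : Matrix (Fin 2) (Fin 2) ℝ) =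
      !![1 + x j * y j + (x j * y j) ^ 2, -(x j * (x j * y j));
        y j * (x j * y j), 1 - x j * y j] := by
  simp only [commutatorElement_def, Pi.mul_apply, Pi.inv_apply,
    Matrix.SpecialLinearGroup.coe_mul, Matrix.SpecialLinearGroup.coe_inv]
  simp only [Tmat, Vmat, Matrix.adjugate_fin_two_of, Matrix.mul_fin_two]
  ext i k
  fin_cases i <;> fin_cases k <;> simp <;> ring

lemma tendsto_commutatorElement_Tmat_Vmat_one {n : ℕ} {ι : Type*} {l : Filter ι}
    (x : Fin n → ℝ) (y : ι → Fin n → ℝ)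
    (hy : ∀ j, x j = 0 ∨ Tendsto (fun k => y k j) l (𝓝 0)) :
    Tendsto (fun k => ⁅Tmat n x, Vmat n (y k)⁆) l (𝓝 1) := by
  rw [tendsto_pi_nhds]
  intro j
  rw [nhds_induced, tendsto_comap_iff]
  simp only [Function.comp_def, coe_commutatorElement_Tmat_Vmat_apply, Pi.one_apply,
    Matrix.SpecialLinearGroup.coe_one]
  rcases hy j with hx | hy
  · simpa [hx, Matrix.one_fin_two] using tendsto_const_nhds
  · have hcont : Continuous fun b : ℝ =>
        !![1 + x j * b + (x j * b) ^ 2, -(x j * (x j * b)); b * (x j * b), 1 - x j * b] := by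
      fun_prop
    simpa [Matrix.one_fin_two, Function.comp_def] using (hcont.tendsto 0).comp hy

lemma Filter.Tendsto.eventually_eq_of_discreteTopology {X ι : Type*} [TopologicalSpace X]
    {s : Set X} [DiscreteTopology s] {l : Filter ι} {u : ι → X} {a : X}
    (h : Tendsto u l (𝓝 a)) (hu : ∀ k, u k ∈ s) (ha : a ∈ s) :
    ∀ᶠ k in l, u k = a := by
  have hs : Tendsto (fun k => (⟨u k, hu k⟩ : s)) l (𝓝 ⟨a, ha⟩) := tendsto_subtype_rng.mpr h
  rw [nhds_discrete, tendsto_pure] at hs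
  exact hs.mono fun k hk => congrArg Subtype.val hk

/-- If `n ≥ 2`, `L₁, L₂ ⊂ ℝⁿ` are lattices and `x₀ ∈ L₁` is nonzero with first coordinate
zero, then there are nonzero `y_k ∈ L₂` with `[T^{x₀}, V^{y_k}] → 1` in `SL₂(ℝ)ⁿ`;
consequently, if the group generated by the `T^x`, `x ∈ L₁`, and `V^y`, `y ∈ L₂`, is
discrete, then `[T^{x₀}, V^{y}] = 1` for some nonzero `y ∈ L₂`. -/
theorem commutators_tendsto_one (n : ℕ) (hn : 2 ≤ n)
    (L₁ L₂ : Submodule ℤ (Fin n → ℝ))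
    [DiscreteTopology L₂] [IsZLattice ℝ L₂]
    (x₀ : Fin n → ℝ) (hx₀ : x₀ ∈ L₁)
    (hx₀first : x₀ ⟨0, by omega⟩ = 0) :
    (∃ y : ℕ → Fin n → ℝ, (∀ k, y k ∈ L₂ ∧ y k ≠ 0) ∧
        Tendsto (fun k => ⁅Tmat n x₀, Vmat n (y k)⁆) atTop (nhds 1)) ∧
      (DiscreteTopology (Subgroup.closure
          ((fun x : L₁ => Tmat n x) '' Set.univ ∪ (fun y : L₂ => Vmat n y) '' Set.univ)) →
        ∃ y ∈ L₂, y ≠ 0 ∧ ⁅Tmat n x₀, Vmat n y⁆ = 1) := by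
  obtain ⟨y, hy, hlim⟩ := IsZLattice.exists_seq_mem_ne_zero_tendsto_apply_zero L₂ ⟨0, by omega⟩
  have hcomm : Tendsto (fun k => ⁅Tmat n x₀, Vmat n (y k)⁆) atTop (𝓝 1) :=
    tendsto_commutatorElement_Tmat_Vmat_one x₀ y fun j =>
      (eq_or_ne j ⟨0, by omega⟩).imp (fun hj : j = ⟨0, _⟩ => hj ▸ hx₀first) (hlim j)
  refine ⟨⟨y, hy, hcomm⟩, fun hdisc => ?_⟩
  set H := Subgroup.closure
    ((fun x : L₁ => Tmat n x) '' Set.univ ∪ (fun y : L₂ => Vmat n y) '' Set.univ)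
  have hT : Tmat n x₀ ∈ H := Subgroup.subset_closure (Or.inl ⟨⟨x₀, hx₀⟩, trivial, rfl⟩)
  have hV : ∀ k, Vmat n (y k) ∈ H :=
    fun k => Subgroup.subset_closure (Or.inr ⟨⟨y k, (hy k).1⟩, trivial, rfl⟩)
  have hmem : ∀ k, ⁅Tmat n x₀, Vmat n (y k)⁆ ∈ H := fun k => by
    rw [commutatorElement_def]
    exact mul_mem (mul_mem (mul_mem hT (hV k)) (inv_mem hT)) (inv_mem (hV k))
  obtain ⟨k, hk⟩ := (hcomm.eventually_eq_of_discreteTopology hmem H.one_mem).exists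
  exact ⟨y k, (hy k).1, (hy k).2, hk⟩
end

section
/- Let $G$ be an infinite group and $R = \mathbb{C}[G]$ its group algebra. Then every nonzero right ideal $J \subset R$ is infinite dimensional as a complex vector space. -/
namespace MonoidAlgebra

variable {R M : Type*} [Semiring R]

theorem exists_finset_coeff_support_subset_of_fg {J : Submodule R R[M]} (hJ : J.FG) :
    ∃ U : Finset M, ∀ x ∈ J, x.coeff.support ⊆ U := by
  classical
  obtain ⟨S, hS⟩ := hJ.map (coeffLinearEquiv R).toLinearMap
  refine ⟨S.biUnion Finsupp.support, fun x hx ↦ ?_⟩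
  have hspan : x.coeff ∈ Submodule.span R (S : Set (M →₀ R)) :=
    hS ▸ Submodule.mem_map_of_mem hx
  have hsupp := (Finsupp.mem_supported R _).mp (Finsupp.span_le_supported_biUnion_support R _ hspan)
  intro m hm
  simpa using hsupp hm

/-- The right translate `a * single g 1 ∈ J` carries the coefficient `a.coeff s` at `s * g`, so
the supports of the elements of `J` cover the copy `s * M` of `M`. -/
theorem finite_of_fg_of_mul_mem_of_ne_bot [Monoid M] [IsCancelMul M] {J : Submodule R R[M]}
    (hfg : J.FG) (hJ : ∀ a ∈ J, ∀ r : R[M], a * r ∈ J) (hJne : J ≠ ⊥) : Finite M := by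
  obtain ⟨U, hU⟩ := exists_finset_coeff_support_subset_of_fg hfg
  obtain ⟨a, haJ, ha0⟩ := J.exists_mem_ne_zero_of_ne_bot hJne
  obtain ⟨s, hs⟩ := Finsupp.support_nonempty_iff.mpr (coeff_eq_zero.not.mpr ha0)
  have hmem (g : M) : s * g ∈ U := hU _ (hJ a haJ (single g 1)) (by simpa using hs)
  exact Finite.of_injective (fun g ↦ (⟨s * g, hmem g⟩ : U))
    fun g₁ g₂ h ↦ mul_left_cancel (congrArg Subtype.val h)

end MonoidAlgebra

/-- Every nonzero right ideal of the group algebra `ℂ[G]` of an infinite group `G` is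
infinite dimensional over `ℂ`. -/
theorem right_ideal_infinite_dimensional (G : Type*) [Group G] [Infinite G]
    (J : Submodule ℂ (MonoidAlgebra ℂ G))
    (hJ : ∀ a ∈ J, ∀ r : MonoidAlgebra ℂ G, a * r ∈ J) (hJne : J ≠ ⊥) :
    ¬ FiniteDimensional ℂ J := fun hfd ↦
  not_finite_iff_infinite.mpr ‹Infinite G›
    (MonoidAlgebra.finite_of_fg_of_mul_mem_of_ne_bot (Module.Finite.iff_fg.mp hfd) hJ hJne)
end

section
/- Let $a, b, x, y$ be elements of the ring of integers $\mathcal{O}_K$ of a number field satisfying $(1+4a)(1+4x) = 1$ and $(1-3b)(1-3y) = 1$. Define the eight matrices $\gamma_0 = I$, $\gamma_1 = \begin{pmatrix} 0 & 1 \\ -1 & 2a \end{pmatrix}$, $\gamma_2 = \begin{pmatrix} -1 & 2a \\ 2 & -(1+4a) \end{pmatrix}$, $\gamma_3 = \begin{pmatrix} 2 & -(1+4a) \\ \frac{1-4b}{1+4a} & 2b \end{pmatrix}$, $\gamma_4 = \begin{pmatrix} \frac{1-4b}{1+4a} & 2b \\ 2y & \frac{1-4y}{1+4x} \end{pmatrix}$,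 $\gamma_5 = \begin{pmatrix} 2y & \frac{1-4y}{1+4x} \\ -(1+4x) & 2 \end{pmatrix}$, $\gamma_6 = \begin{pmatrix} -(1+4x) & 2 \\ 2x & -1 \end{pmatrix}$, $\gamma_7 = \begin{pmatrix} 2x & -1 \\ 1 & 0 \end{pmatrix}$. Then each $\gamma_r$ has determinant $1$, and for each $r \in \mathbb{Z}/8\mathbb{Z}$ the bottom row of $\gamma_r$ equals the top row of $\gamma_{r+1}$. -/
open NumberField

set_option maxHeartbeats 1000000 in
/-- The eight matrices `γ₀, …, γ₇` built from solutions of `(1+4a)(1+4x) = 1` and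
`(1-3b)(1-3y) = 1` in the ring of integers of a number field all have determinant `1`, and
the bottom row of each equals the top row of the next (cyclically).  Here
`(1-4b)/(1+4a) = (1-4b)(1+4x)` and `(1-4y)/(1+4x) = (1-4y)(1+4a)`, since
`(1+4a)⁻¹ = 1+4x` and `(1+4x)⁻¹ = 1+4a`. -/
theorem eight_matrices_chain (K : Type*) [Field K] [NumberField K]
    (a b x y : 𝓞 K) (h1 : (1 + 4 * a) * (1 + 4 * x) = 1)
    (h2 : (1 - 3 * b) * (1 - 3 * y) = 1)
    (γ : Fin 8 → Matrix (Fin 2) (Fin 2) (𝓞 K))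
    (hγ : γ = ![1,
      !![0, 1; -1, 2 * a],
      !![-1, 2 * a; 2, -(1 + 4 * a)],
      !![2, -(1 + 4 * a); (1 - 4 * b) * (1 + 4 * x), 2 * b],
      !![(1 - 4 * b) * (1 + 4 * x), 2 * b; 2 * y, (1 - 4 * y) * (1 + 4 * a)],
      !![2 * y, (1 - 4 * y) * (1 + 4 * a); -(1 + 4 * x), 2],
      !![-(1 + 4 * x), 2; 2 * x, -1],
      !![2 * x, -1; 1, 0]]) :
    (∀ r : Fin 8, (γ r).det = 1) ∧ ∀ r : Fin 8, (γ r) 1 = (γ (r + 1)) 0 := by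
  have h3 : (3 : 𝓞 K) * (b + y - 3 * (b * y)) = 0 := by linear_combination -h2
  have key : b + y = 3 * (b * y) := by
    rcases mul_eq_zero.mp h3 with h | h
    · exact absurd h (by norm_num)
    · linear_combination h
  subst hγ
  constructor
  · intro r
    fin_cases r
    · simp
    · norm_num [Matrix.det_fin_two, Matrix.cons_val_succ]
    · norm_num [Matrix.det_fin_two, Matrix.cons_val_succ]; ring
    · norm_num [Matrix.det_fin_two, Matrix.cons_val_succ]
      linear_combination (1 - 4 * b) * h1
    · norm_num [Matrix.det_fin_two, Matrix.cons_val_succ]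
      linear_combination (1 - 4 * b) * (1 - 4 * y) * h1 - 4 * key
    · norm_num [Matrix.det_fin_two, Matrix.cons_val_succ]
      linear_combination (1 - 4 * y) * h1
    · norm_num [Matrix.det_fin_two, Matrix.cons_val_succ]; ring
    · norm_num [Matrix.det_fin_two, Matrix.cons_val_succ]
  · intro r
    clear h1 h2 h3 key
    fin_cases r <;>
      simp only [show ∀ (k : Fin 8), k + 1 = ⟨(k.val + 1) % 8, Nat.mod_lt _ (by norm_num)⟩ from
        fun k => by simp [Fin.add_def]] <;>
      norm_num [Matrix.cons_val_succ] <;>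
      ext i <;> fin_cases i <;> norm_num [Matrix.cons_val_succ, Matrix.one_apply]
end

section
/- Fix a real number $\lambda \geq 2$. Consider all matrices $\gamma \in \mathrm{SL}_2(\mathbb{R})$ expressible as $\gamma = V^{e_1\lambda} T^{f_1\lambda} \cdots V^{e_n\lambda} T^{f_n\lambda}$ with $n \geq 1$, $e_1, \dots, e_n, f_1, \dots, f_{n-1}$ nonzero integers and $f_n \in \mathbb{Z}$, and write $\gamma = \begin{pmatrix} a & b \\ c & d \end{pmatrix}$. Then: (i) if $f_n = 0$ then $|c| \geq |d|$; (ii) if $f_n \neq 0$ then $|d| \geq |c|$; (iii) $c \neq 0$ and $d \neq 0$; (iv) $|a| \leq |c|$ and $|b| \leq |d|$. -/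
namespace WordEntryAux

noncomputable def blk (lam : ℝ) (p : ℤ × ℤ) : Matrix (Fin 2) (Fin 2) ℝ :=
  !![1, 0; (p.1 : ℝ) * lam, 1] * !![1, (p.2 : ℝ) * lam; 0, 1]

noncomputable def word (lam : ℝ) (L : List (ℤ × ℤ)) : Matrix (Fin 2) (Fin 2) ℝ :=
  (L.map (blk lam)).prod

noncomputable def tword (lam : ℝ) (f : ℤ) (L : List (ℤ × ℤ)) : Matrix (Fin 2) (Fin 2) ℝ :=
  !![1, (f:ℝ)*lam; 0, 1] * word lam L

lemma blk_eq (lam : ℝ) (p : ℤ × ℤ) :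
    blk lam p = !![1, (p.2:ℝ)*lam; (p.1:ℝ)*lam, (p.1:ℝ)*lam*((p.2:ℝ)*lam)+1] := by
  simp [blk, Matrix.mul_fin_two]

lemma one_le_abs_cast {m : ℤ} (hm : m ≠ 0) : (1:ℝ) ≤ |(m:ℝ)| := by
  rw [← Int.cast_abs]; exact_mod_cast Int.one_le_abs hm

/-- core estimate: `|x + mλy| ≥ λ|y| - |x|` for nonzero integer `m`. -/
lemma core (lam : ℝ) (hlam : 2 ≤ lam) {m : ℤ} (hm : m ≠ 0) (x y : ℝ) :
    lam * |y| - |x| ≤ |x + (m:ℝ) * lam * y| := by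
  have h1 := one_le_abs_cast hm
  have h2 : |(m:ℝ) * lam * y| - |(-x)| ≤ |(m:ℝ)*lam*y - (-x)| := abs_sub_abs_le_abs_sub _ _
  rw [abs_neg, sub_neg_eq_add] at h2
  have h3 : |(m:ℝ)*lam*y| = |(m:ℝ)| * lam * |y| := by
    rw [abs_mul, abs_mul, abs_of_nonneg (by linarith : (0:ℝ) ≤ lam)]
  have hy := abs_nonneg y
  rw [show (m:ℝ)*lam*y + x = x + (m:ℝ)*lam*y from by ring, h3] at h2
  have h5 : lam*|y| ≤ |(m:ℝ)| * (lam*|y|) :=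
    le_mul_of_one_le_left (mul_nonneg (by linarith) hy) h1
  nlinarith

lemma mul_blk_10 (lam : ℝ) (g : Matrix (Fin 2) (Fin 2) ℝ) (p : ℤ × ℤ) :
    (g * blk lam p) 1 0 = g 1 0 + (p.1:ℝ)*lam * g 1 1 := by
  rw [blk_eq]; simp [Matrix.mul_apply, Fin.sum_univ_two]; ring

lemma mul_blk_11 (lam : ℝ) (g : Matrix (Fin 2) (Fin 2) ℝ) (p : ℤ × ℤ) :
    (g * blk lam p) 1 1 = (p.2:ℝ)*lam * (g 1 0 + (p.1:ℝ)*lam * g 1 1) + g 1 1 := by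
  rw [blk_eq]; simp [Matrix.mul_apply, Fin.sum_univ_two]; ring

lemma word_cons (lam : ℝ) (p : ℤ × ℤ) (L : List (ℤ × ℤ)) :
    word lam (p :: L) = blk lam p * word lam L := by
  simp [word]

lemma bottom (lam : ℝ) (hlam : 2 ≤ lam) :
    ∀ (L : List (ℤ × ℤ)) (hL : L ≠ []),
    (∀ p ∈ L, p.1 ≠ 0) →
    (∀ i (hi : i + 1 < L.length), (L.get ⟨i, by omega⟩).2 ≠ 0) →
    ∀ g : Matrix (Fin 2) (Fin 2) ℝ, |g 1 0| ≤ |g 1 1| → g 1 1 ≠ 0 →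
      (((L.getLast hL).2 = 0 → |(g * word lam L) 1 1| ≤ |(g * word lam L) 1 0|) ∧
       ((L.getLast hL).2 ≠ 0 → |(g * word lam L) 1 0| ≤ |(g * word lam L) 1 1|) ∧
       (g * word lam L) 1 0 ≠ 0 ∧ (g * word lam L) 1 1 ≠ 0) := by
  intro L
  induction L with
  | nil => intro hL; exact absurd rfl hL
  | cons p L' ih =>
    intro _ he hf g hg1 hg2
    have hlam1 : (1:ℝ) ≤ lam - 1 := by linarith
    set g' := g * blk lam p with hg'
    have h10 : g' 1 0 = g 1 0 + (p.1:ℝ)*lam * g 1 1 := mul_blk_10 lam g p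
    have h11 : g' 1 1 = (p.2:ℝ)*lam * g' 1 0 + g 1 1 := by
      rw [hg', mul_blk_11 lam g p, mul_blk_10 lam g p]
    have hd : 0 < |g 1 1| := abs_pos.mpr hg2
    have hc' : (lam - 1) * |g 1 1| ≤ |g' 1 0| := by
      rw [h10]
      have := core lam hlam (he p (by simp)) (g 1 0) (g 1 1)
      linarith
    have hc'pos : 0 < |g' 1 0| := by nlinarith
    have hc'ne : g' 1 0 ≠ 0 := abs_pos.mp hc'pos
    have hword : g * word lam (p :: L') = g' * word lam L' := by
      rw [word_cons, ← Matrix.mul_assoc]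
    rcases eq_or_ne L' [] with h' | h'
    · subst h'
      have hlast : ((p :: ([] : List (ℤ × ℤ))).getLast (by simp)) = p := rfl
      simp only [hlast]
      have hw : g * word lam [p] = g' := by
        rw [hword]; simp [word]
      rw [hw]
      refine ⟨?_, ?_, hc'ne, ?_⟩
      · intro h0
        rw [h11, h0]
        simp only [Int.cast_zero, zero_mul, zero_add]
        calc |g 1 1| ≤ (lam - 1) * |g 1 1| := by nlinarith
          _ ≤ |g' 1 0| := hc'
      · intro hne
        rw [h11]
        have := core lam hlam hne (g 1 1) (g' 1 0)
        have h2 : |g 1 1| ≤ |g' 1 0| := le_trans (by nlinarith) hc'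
        calc |g' 1 0| ≤ lam * |g' 1 0| - |g 1 1| := by nlinarith
          _ ≤ |g 1 1 + (p.2:ℝ)*lam * g' 1 0| := this
          _ = |(p.2:ℝ)*lam * g' 1 0 + g 1 1| := by rw [add_comm]
      · rw [h11]
        rcases eq_or_ne p.2 0 with h0 | hne
        · rw [h0]; simpa using hg2
        · have := core lam hlam hne (g 1 1) (g' 1 0)
          have : 0 < |(p.2:ℝ)*lam * g' 1 0 + g 1 1| := by
            rw [show (p.2:ℝ)*lam * g' 1 0 + g 1 1 = g 1 1 + (p.2:ℝ)*lam * g' 1 0 from by ring]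
            nlinarith
          exact abs_pos.mp this
    · -- L' nonempty: p.2 ≠ 0 is interior
      have hp2 : p.2 ≠ 0 := by
        have hlen : 0 + 1 < (p :: L').length := by
          simp [List.length_cons]
          exact List.length_pos_iff.mpr h'
        exact hf 0 hlen
      have hg'1 : |g' 1 0| ≤ |g' 1 1| := by
        rw [h11]
        have := core lam hlam hp2 (g 1 1) (g' 1 0)
        have h2 : |g 1 1| ≤ |g' 1 0| := le_trans (by nlinarith) hc'
        calc |g' 1 0| ≤ lam * |g' 1 0| - |g 1 1| := by nlinarith
          _ ≤ |g 1 1 + (p.2:ℝ)*lam * g' 1 0| := this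
          _ = |(p.2:ℝ)*lam * g' 1 0 + g 1 1| := by rw [add_comm]
      have hg'2 : g' 1 1 ≠ 0 := by
        intro h0
        rw [h0] at hg'1
        simp at hg'1
        exact hc'ne (by linarith [abs_nonneg (g' 1 0), hg'1])
      have hlast : (p :: L').getLast (by simp) = L'.getLast h' := List.getLast_cons h'
      have he' : ∀ q ∈ L', q.1 ≠ 0 := fun q hq => he q (List.mem_cons_of_mem p hq)
      have hf' : ∀ i (hi : i + 1 < L'.length), (L'.get ⟨i, by omega⟩).2 ≠ 0 := by
        intro i hi
        have := hf (i+1) (by simpa [List.length_cons] using Nat.succ_lt_succ hi)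
        simpa using this
      have := ih h' he' hf' g' hg'1 hg'2
      rw [hword, hlast]
      exact this

lemma Vmul_apply (x : ℝ) (δ : Matrix (Fin 2) (Fin 2) ℝ) (j : Fin 2) :
    (!![1, 0; x, 1] * δ) 0 j = δ 0 j ∧ (!![1, 0; x, 1] * δ) 1 j = x * δ 0 j + δ 1 j := by
  constructor <;> simp [Matrix.mul_apply, Fin.sum_univ_two]

lemma Tmul_apply (y : ℝ) (δ : Matrix (Fin 2) (Fin 2) ℝ) (j : Fin 2) :
    (!![1, y; 0, 1] * δ) 0 j = δ 0 j + y * δ 1 j ∧ (!![1, y; 0, 1] * δ) 1 j = δ 1 j := by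
  constructor <;> simp [Matrix.mul_apply, Fin.sum_univ_two]

/-- T-word invariant -/
def Inv (lam : ℝ) (δ : Matrix (Fin 2) (Fin 2) ℝ) : Prop :=
  ∀ j : Fin 2, δ 0 j = 0 ∨ |δ 1 j| ≤ (lam - 1) * |δ 0 j|

lemma invT (lam : ℝ) (hlam : 2 ≤ lam) :
    ∀ (L : List (ℤ × ℤ)) (f : ℤ), (f ≠ 0 ∨ L = []) →
    (∀ p ∈ L, p.1 ≠ 0) →
    (∀ i (hi : i + 1 < L.length), (L.get ⟨i, by omega⟩).2 ≠ 0) →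
    Inv lam (tword lam f L) := by
  intro L
  induction L with
  | nil =>
    intro f hf _ _
    have hδ : tword lam f [] = !![1, (f:ℝ)*lam; 0, 1] := by simp [tword, word]
    have h00 : tword lam f [] 0 0 = 1 := by rw [hδ]; norm_num
    have h10 : tword lam f [] 1 0 = 0 := by rw [hδ]; norm_num
    have h01 : tword lam f [] 0 1 = (f:ℝ)*lam := by rw [hδ]; norm_num
    have h11 : tword lam f [] 1 1 = 1 := by rw [hδ]; norm_num
    intro j
    fin_cases j
    · right
      show |tword lam f [] 1 0| ≤ (lam - 1) * |tword lam f [] 0 0|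
      rw [h00, h10]
      simp
      linarith
    · rcases eq_or_ne f 0 with h0 | hne
      · left
        show tword lam f [] 0 1 = 0
        rw [h01, h0]; simp
      · right
        show |tword lam f [] 1 1| ≤ (lam - 1) * |tword lam f [] 0 1|
        rw [h01, h11]
        have h1 := one_le_abs_cast hne
        have habs : |((f:ℝ)*lam)| = |(f:ℝ)| * lam := by
          rw [abs_mul, abs_of_nonneg (by linarith : (0:ℝ) ≤ lam)]
        rw [habs, abs_one]
        have h2 : (2:ℝ) ≤ |(f:ℝ)| * lam := by nlinarith
        nlinarith [mul_le_mul_of_nonneg_right (by linarith : (1:ℝ) ≤ lam - 1)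
          (by positivity : (0:ℝ) ≤ |(f:ℝ)| * lam)]
  | cons q L' ih =>
    intro f hf he hfint
    have hfne : f ≠ 0 := hf.resolve_right (by simp)
    have hq1 : q.1 ≠ 0 := he q (by simp)
    -- tail hypotheses
    have hq2orL : q.2 ≠ 0 ∨ L' = [] := by
      rcases eq_or_ne L' [] with h' | h'
      · exact Or.inr h'
      · left
        have hlen : 0 + 1 < (q :: L').length := by
          simp [List.length_cons]; exact List.length_pos_iff.mpr h'
        exact hfint 0 hlen
    have he' : ∀ p ∈ L', p.1 ≠ 0 := fun p hp => he p (List.mem_cons_of_mem q hp)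
    have hfint' : ∀ i (hi : i + 1 < L'.length), (L'.get ⟨i, by omega⟩).2 ≠ 0 := by
      intro i hi
      have := hfint (i+1) (by simpa [List.length_cons] using Nat.succ_lt_succ hi)
      simpa using this
    have hInvδ : Inv lam (tword lam q.2 L') := ih q.2 hq2orL he' hfint'
    set δ := tword lam q.2 L' with hδ
    have hsplit : tword lam f (q :: L') =
        !![1, (f:ℝ)*lam; 0, 1] * (!![1, 0; (q.1:ℝ)*lam, 1] * δ) := by
      simp only [hδ, tword, word_cons, blk, Matrix.mul_assoc]
    set σ := !![1, 0; (q.1:ℝ)*lam, 1] * δ with hσ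
    -- V-step invariant: |σ 0 j| ≤ (lam-1) * |σ 1 j|
    have hVinv : ∀ j : Fin 2, |σ 0 j| ≤ (lam - 1) * |σ 1 j| := by
      intro j
      have h0 := (Vmul_apply ((q.1:ℝ)*lam) δ j).1
      have h1 := (Vmul_apply ((q.1:ℝ)*lam) δ j).2
      rw [← hσ] at h0 h1
      rw [h0, h1]
      rcases hInvδ j with hz | hle
      · rw [hz]
        simp only [mul_zero, zero_mul, zero_add, abs_zero]
        exact mul_nonneg (by linarith) (abs_nonneg _)
      · have hcore := core lam hlam hq1 (δ 1 j) (δ 0 j)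
        have : |δ 0 j| ≤ |δ 1 j + (q.1:ℝ)*lam * δ 0 j| := by linarith
        rw [show (q.1:ℝ)*lam * δ 0 j + δ 1 j = δ 1 j + (q.1:ℝ)*lam * δ 0 j from by ring]
        nlinarith [abs_nonneg (δ 1 j + (q.1:ℝ)*lam * δ 0 j)]
    -- T-step
    rw [hsplit]
    intro j
    right
    have h0 := (Tmul_apply ((f:ℝ)*lam) σ j).1
    have h1 := (Tmul_apply ((f:ℝ)*lam) σ j).2
    rw [h0, h1]
    have hcore := core lam hlam hfne (σ 0 j) (σ 1 j)
    have h2 : |σ 1 j| ≤ |σ 0 j + (f:ℝ)*lam * σ 1 j| := by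
      have := hVinv j
      nlinarith
    nlinarith [abs_nonneg (σ 0 j + (f:ℝ)*lam * σ 1 j), h2]

lemma top (lam : ℝ) (hlam : 2 ≤ lam) (L : List (ℤ × ℤ)) (hL : L ≠ [])
    (he : ∀ p ∈ L, p.1 ≠ 0)
    (hfint : ∀ i (hi : i + 1 < L.length), (L.get ⟨i, by omega⟩).2 ≠ 0) :
    ∀ j : Fin 2, |word lam L 0 j| ≤ |word lam L 1 j| := by
  match L with
  | [] => exact absurd rfl hL
  | p :: L' =>
    have hp1 : p.1 ≠ 0 := he p (by simp)
    have hq2orL : p.2 ≠ 0 ∨ L' = [] := by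
      rcases eq_or_ne L' [] with h' | h'
      · exact Or.inr h'
      · left
        have hlen : 0 + 1 < (p :: L').length := by
          simp [List.length_cons]; exact List.length_pos_iff.mpr h'
        exact hfint 0 hlen
    have he' : ∀ q ∈ L', q.1 ≠ 0 := fun q hq => he q (List.mem_cons_of_mem p hq)
    have hfint' : ∀ i (hi : i + 1 < L'.length), (L'.get ⟨i, by omega⟩).2 ≠ 0 := by
      intro i hi
      have := hfint (i+1) (by simpa [List.length_cons] using Nat.succ_lt_succ hi)
      simpa using this
    have hInvδ : Inv lam (tword lam p.2 L') := invT lam hlam L' p.2 hq2orL he' hfint'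
    set δ := tword lam p.2 L' with hδ
    have hsplit : word lam (p :: L') = !![1, 0; (p.1:ℝ)*lam, 1] * δ := by
      rw [hδ, tword, word_cons, blk, Matrix.mul_assoc]
    intro j
    rw [hsplit]
    have h0 := (Vmul_apply ((p.1:ℝ)*lam) δ j).1
    have h1 := (Vmul_apply ((p.1:ℝ)*lam) δ j).2
    rw [h0, h1]
    rcases hInvδ j with hz | hle
    · rw [hz]; simp
    · have hcore := core lam hlam hp1 (δ 1 j) (δ 0 j)
      rw [show (p.1:ℝ)*lam * δ 0 j + δ 1 j = δ 1 j + (p.1:ℝ)*lam * δ 0 j from by ring]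
      linarith

end WordEntryAux

/-- Entry inequalities for elements `γ = V^{e₁λ} T^{f₁λ} ⋯ V^{eₙλ} T^{fₙλ}` of the set
`𝒱_λ` (with `λ ≥ 2` real, `e₁, …, eₙ, f₁, …, f_{n-1}` nonzero integers, `fₙ ∈ ℤ`):
(i) if `fₙ = 0` then `|c| ≥ |d|`; (ii) if `fₙ ≠ 0` then `|d| ≥ |c|`;
(iii) `c ≠ 0` and `d ≠ 0`; (iv) `|a| ≤ |c|` and `|b| ≤ |d|`. -/
theorem word_entry_inequalities (lam : ℝ) (hlam : 2 ≤ lam)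
    (n : ℕ) (hn : 1 ≤ n) (e f : Fin n → ℤ)
    (he : ∀ i, e i ≠ 0) (hf : ∀ i : Fin n, (i : ℕ) + 1 < n → f i ≠ 0)
    (γ : Matrix (Fin 2) (Fin 2) ℝ)
    (hγ : γ = ((List.finRange n).map (fun i =>
      (!![1, 0; (e i : ℝ) * lam, 1] : Matrix (Fin 2) (Fin 2) ℝ) *
        !![1, (f i : ℝ) * lam; 0, 1])).prod) :
    (f ⟨n - 1, by omega⟩ = 0 → |γ 1 1| ≤ |γ 1 0|) ∧
      (f ⟨n - 1, by omega⟩ ≠ 0 → |γ 1 0| ≤ |γ 1 1|) ∧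
      (γ 1 0 ≠ 0 ∧ γ 1 1 ≠ 0) ∧
      (|γ 0 0| ≤ |γ 1 0| ∧ |γ 0 1| ≤ |γ 1 1|) := by
  set L : List (ℤ × ℤ) := (List.finRange n).map (fun i => (e i, f i)) with hLdef
  have hlen : L.length = n := by simp [hLdef]
  have hL : L ≠ [] := by
    intro h
    rw [h] at hlen
    simp at hlen
    omega
  have hword : γ = WordEntryAux.word lam L := by
    rw [hγ, WordEntryAux.word, hLdef, List.map_map]
    rfl
  have he' : ∀ p ∈ L, p.1 ≠ 0 := by
    intro p hp
    simp only [hLdef, List.mem_map] at hp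
    obtain ⟨i, _, rfl⟩ := hp
    exact he i
  have hget : ∀ i (hi : i < n), L.get ⟨i, by omega⟩ = (e ⟨i, hi⟩, f ⟨i, hi⟩) := by
    intro i hi
    simp [hLdef]
  have hfint : ∀ i (hi : i + 1 < L.length), (L.get ⟨i, by omega⟩).2 ≠ 0 := by
    intro i hi
    rw [hlen] at hi
    rw [hget i (by omega)]
    exact hf ⟨i, by omega⟩ (by simpa)
  have hlast : (L.getLast hL).2 = f ⟨n - 1, by omega⟩ := by
    have h1 : L.getLast hL = L.get ⟨L.length - 1, by
        have := List.length_pos_iff.mpr hL; omega⟩ := by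
      rw [List.getLast_eq_getElem]; rfl
    have h2 : L.get ⟨L.length - 1, by have := List.length_pos_iff.mpr hL; omega⟩ =
        L.get ⟨n - 1, by omega⟩ := by
      congr 1
      ext
      simp [hlen]
    rw [h1, h2, hget (n-1) (by omega)]
  have hbot := WordEntryAux.bottom lam hlam L hL he' hfint 1
    (by simp [Matrix.one_apply]) (by simp [Matrix.one_apply])
  rw [one_mul] at hbot
  have htop := WordEntryAux.top lam hlam L hL he' hfint
  rw [hlast] at hbot
  rw [hword]
  exact ⟨hbot.1, hbot.2.1, hbot.2.2, htop 0, htop 1⟩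
end

section
/- Let $\kappa > 2$, $y > 0$, $\lambda \geq 2$, and let $t \in \mathbb{R}$ with $|t| \leq 1$, $x \in \mathbb{R}$ with $|x| \leq \lambda/2$. Then $\sum_{e \in \mathbb{Z}} |x + iy + t + e\lambda|^{-\kappa} \leq 3y^{-\kappa} + 2\zeta(\kappa/2)(2\lambda y)^{-\kappa/2}$. -/
/-!
Split the lattice sum according to `|e|`. The three terms with `|e| ≤ 1` are bounded by the
imaginary part alone: `|z|⁻ᵏ ≤ y⁻ᵏ`. For `|e| ≥ 2` the real part of `z` has size at least
`λ(|e| - 1)`, so `|z|² ≥ 2 |Re z| |Im z| ≥ 2λy(|e| - 1)`, and the two tails `e ≥ 2`, `e ≤ -2`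
are each dominated by `ζ(κ/2) (2λy)^{-κ/2}`.
-/

open Complex

theorem HasSum.int_natAbs {M : Type*} [AddCommMonoid M] [TopologicalSpace M] [ContinuousAdd M]
    {φ : ℕ → M} {m : M} (h : HasSum (fun n ↦ φ (n + 1)) m) :
    HasSum (fun e : ℤ ↦ φ e.natAbs) (m + φ 0 + m) :=
  have hpos : (fun n : ℕ ↦ φ ((n : ℤ) + 1).natAbs) = fun n ↦ φ (n + 1) :=
    funext fun n ↦ congrArg φ (by omega)
  have hneg : (fun n : ℕ ↦ φ (-((n : ℤ) + 1)).natAbs) = fun n ↦ φ (n + 1) :=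
    funext fun n ↦ congrArg φ (by omega)
  HasSum.of_add_one_of_neg_add_one (hpos ▸ h) (hneg ▸ h)

theorem Complex.two_mul_abs_re_mul_abs_im_le_sq_norm (z : ℂ) : 2 * |z.re| * |z.im| ≤ ‖z‖ ^ 2 := by
  rw [Complex.sq_norm, Complex.normSq_apply]
  nlinarith [sq_nonneg (|z.re| - |z.im|), sq_abs z.re, sq_abs z.im]

theorem mul_abs_sub_one_le_abs_add_mul {u e lam : ℝ} (hlam : 0 ≤ lam) (hu : |u| ≤ lam) :
    lam * (|e| - 1) ≤ |u + e * lam| := by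
  have := abs_sub_abs_le_abs_add (e * lam) u
  rw [abs_mul, abs_of_nonneg hlam, add_comm] at this
  linarith

noncomputable def latticeMajorant (A C s : ℝ) : ℕ → ℝ
  | 0 => A
  | 1 => A
  | n + 2 => ((n : ℝ) + 1) ^ (-s) * C

theorem hasSum_latticeMajorant_natAbs (A C : ℝ) {s : ℝ} (hs : 1 < s) :
    HasSum (fun e : ℤ ↦ latticeMajorant A C s e.natAbs)
      (3 * A + 2 * (∑' n : ℕ, ((n : ℝ) + 1) ^ (-s)) * C) := by
  have hζ : Summable fun n : ℕ ↦ ((n : ℝ) + 1) ^ (-s) := by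
    simpa using (summable_nat_add_iff 1).mpr (Real.summable_nat_rpow.mpr (by linarith : -s < -1))
  have htail : HasSum (fun n ↦ latticeMajorant A C s (n + 1))
      (A + (∑' n : ℕ, ((n : ℝ) + 1) ^ (-s)) * C) :=
    HasSum.zero_add (f := fun n ↦ latticeMajorant A C s (n + 1)) (hζ.hasSum.mul_right C)
  convert htail.int_natAbs using 1
  simp only [latticeMajorant]
  ring

section LatticeSum

variable {κ y lam t x : ℝ}

theorem norm_rpow_neg_le_im_rpow_neg {z : ℂ} (hz : 0 < z.im) (hκ : 0 ≤ κ) :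
    ‖z‖ ^ (-κ) ≤ z.im ^ (-κ) :=
  Real.rpow_le_rpow_of_nonpos hz ((le_abs_self _).trans (abs_im_le_norm z)) (by linarith)

theorem norm_rpow_neg_le_latticeMajorant (hκ : 0 ≤ κ) (hy : 0 < y) (hlam : 2 ≤ lam)
    (ht : |t| ≤ 1) (hx : |x| ≤ lam / 2) (e : ℤ) :
    ‖(x : ℂ) + y * I + t + (e : ℂ) * lam‖ ^ (-κ) ≤
      latticeMajorant (y ^ (-κ)) ((2 * lam * y) ^ (-(κ / 2))) (κ / 2) e.natAbs := by
  set z : ℂ := x + y * I + t + (e : ℂ) * lam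
  have him : z.im = y := by simp [z]
  have hre : z.re = (x + t) + e * lam := by simp [z]
  have hz : 0 < ‖z‖ := hy.trans_le (him ▸ (le_abs_self _).trans (abs_im_le_norm z))
  rcases hn : e.natAbs with _ | _ | n
  iterate 2 exact him ▸ norm_rpow_neg_le_im_rpow_neg (him ▸ hy) hκ
  simp only [latticeMajorant]
  have he : |(e : ℝ)| = n + 2 := by rw [← Int.cast_abs, Int.abs_eq_natAbs, hn]; push_cast; ring
  have hxt : |x + t| ≤ lam := (abs_add_le x t).trans (by linarith)
  have hsq : ((n : ℝ) + 1) * (2 * lam * y) ≤ ‖z‖ ^ 2 :=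
    calc ((n : ℝ) + 1) * (2 * lam * y) = 2 * (lam * (|(e : ℝ)| - 1)) * |y| := by
          rw [he, abs_of_pos hy]; ring
      _ ≤ 2 * |z.re| * |z.im| := by
          rw [hre, him]
          gcongr
          exact mul_abs_sub_one_le_abs_add_mul (by linarith) hxt
      _ ≤ ‖z‖ ^ 2 := z.two_mul_abs_re_mul_abs_im_le_sq_norm
  calc ‖z‖ ^ (-κ) = (‖z‖ ^ 2) ^ (-(κ / 2)) := by
        rw [← Real.rpow_natCast_mul hz.le]; norm_num; ring_nf
    _ ≤ (((n : ℝ) + 1) * (2 * lam * y)) ^ (-(κ / 2)) :=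
        Real.rpow_le_rpow_of_nonpos (by positivity) hsq (by linarith)
    _ = ((n : ℝ) + 1) ^ (-(κ / 2)) * (2 * lam * y) ^ (-(κ / 2)) :=
        Real.mul_rpow (by positivity) (by positivity)

end LatticeSum

/-- Lattice sum estimate: for `κ > 2`, `y > 0`, `λ ≥ 2`, `|t| ≤ 1`, `|x| ≤ λ/2`,
`∑_{e ∈ ℤ} |x + iy + t + eλ|^{-κ} ≤ 3 y^{-κ} + 2 ζ(κ/2) (2λy)^{-κ/2}`,
where `ζ(κ/2) = ∑_{n ≥ 1} n^{-κ/2}`. -/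
theorem sum_abs_rpow_le (κ y lam t x : ℝ) (hκ : 2 < κ) (hy : 0 < y) (hlam : 2 ≤ lam)
    (ht : |t| ≤ 1) (hx : |x| ≤ lam / 2) :
    (∑' e : ℤ, ‖(x : ℂ) + y * Complex.I + t + (e : ℂ) * lam‖ ^ (-κ)) ≤
      3 * y ^ (-κ) +
        2 * (∑' n : ℕ, ((n : ℝ) + 1) ^ (-(κ / 2))) * (2 * lam * y) ^ (-(κ / 2)) := by
  have hmajorant := hasSum_latticeMajorant_natAbs (y ^ (-κ)) ((2 * lam * y) ^ (-(κ / 2)))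
    (by linarith : 1 < κ / 2)
  have hle := norm_rpow_neg_le_latticeMajorant (κ := κ) (by linarith) hy hlam ht hx
  have hsummable :=
    hmajorant.summable.of_nonneg_of_le (fun _ ↦ Real.rpow_nonneg (norm_nonneg _) _) hle
  exact hasSum_le hle hsummable.hasSum hmajorant
end
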